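/- Fix real parameters a₁, a₂ ∈ (0,1], b₁, b₂ ∈ (0,1), λ₁, λ₂ > 0, set u_i = b_iλ_i/a_i, assume √u₁ + √u₂ < 1, and let q₁, q₂ ∈ (0,1]. Let (p_{1,t}, p_{2,t})_{t≥0} be any sequences with p_{1,0}, p_{2,0} > 0 satisfying the coupled recursion p_{1,t+1} = a₁(1 − b₂·min(λ₂/p_{2,t}, q₂)) and p_{2,t+1} = a₂(1 − b₁·min(λ₁/p_{1,t}, q₁)). If q₁ < λ₁/p_{1,S}, then p_{2,t} > p_{2,S} for all t ≥ 1 and p_{1,t} > p_{1,S} for all t ≥ 2. -/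

import Mathlib

open Real

/-- The product map `F(c) = ∏_{i=1,2} aᵢ c / (aᵢ c + bᵢ λᵢ)`. -/
noncomputable def twoPairF (a₁ a₂ b₁ b₂ l₁ l₂ c : ℝ) : ℝ :=
  (a₁ * c / (a₁ * c + b₁ * l₁)) * (a₂ * c / (a₂ * c + b₂ * l₂))

/-- Discriminant `D = (1 − u₁ − u₂)² − 4 u₁ u₂` with `uᵢ = bᵢ λᵢ / aᵢ`. -/
noncomputable def twoPairD (a₁ a₂ b₁ b₂ l₁ l₂ : ℝ) : ℝ :=
  (1 - b₁ * l₁ / a₁ - b₂ * l₂ / a₂) ^ 2 - 4 * (b₁ * l₁ / a₁) * (b₂ * l₂ / a₂)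

/-- Larger fixed point `c_L = ((1 − u₁ − u₂) + √D)/2`. -/
noncomputable def twoPairCL (a₁ a₂ b₁ b₂ l₁ l₂ : ℝ) : ℝ :=
  ((1 - b₁ * l₁ / a₁ - b₂ * l₂ / a₂) + Real.sqrt (twoPairD a₁ a₂ b₁ b₂ l₁ l₂)) / 2

/-- Smaller fixed point `c_S = ((1 − u₁ − u₂) − √D)/2`. -/
noncomputable def twoPairCS (a₁ a₂ b₁ b₂ l₁ l₂ : ℝ) : ℝ :=
  ((1 - b₁ * l₁ / a₁ - b₂ * l₂ / a₂) - Real.sqrt (twoPairD a₁ a₂ b₁ b₂ l₁ l₂)) / 2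

/-! Writing `uᵢ = bᵢλᵢ/aᵢ`, the number `c_S` is the smaller root of `(c + u₁)(c + u₂) = c`,
which says exactly that `p_{1,S} p_{2,S} = a₁ a₂ c_S` and makes `(p_{1,S}, p_{2,S})` a fixed
point of the recursion with the `min`s replaced by `λᵢ/pᵢ`. Since `q₁ < λ₁/p_{1,S}`, transmitter 1
requests less than at the fixed point, so `p₂` ends strictly above `p_{2,S}` after one step;
then `λ₂/p_{2,t} < λ₂/p_{2,S}`, so transmitter 2 requests less too and `p₁` ends strictly above
`p_{1,S}` one step later. -/

section SmallerRoot

variable {u v : ℝ}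

theorem discrim_pos_of_sqrt_add_sqrt_lt_one (hu : 0 ≤ u) (hv : 0 ≤ v) (h : √u + √v < 1) :
    0 < (1 - u - v) ^ 2 - 4 * u * v := by
  have hx := Real.sqrt_nonneg u
  have hy := Real.sqrt_nonneg v
  have hx2 := Real.sq_sqrt hu
  have hy2 := Real.sq_sqrt hv
  have hsum : 0 < 1 - (√u + √v) ^ 2 := by nlinarith
  have hdiff : 0 < 1 - (√u - √v) ^ 2 := by nlinarith
  have hfactor : (1 - u - v) ^ 2 - 4 * u * v = (1 - (√u + √v) ^ 2) * (1 - (√u - √v) ^ 2) := by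
    conv_lhs => rw [← hx2, ← hy2]
    ring
  rw [hfactor]
  exact mul_pos hsum hdiff

theorem smallerRoot_pos (hu : 0 < u) (hv : 0 < v) (h : √u + √v < 1) :
    0 < ((1 - u - v) - √((1 - u - v) ^ 2 - 4 * u * v)) / 2 := by
  have hs : 0 < 1 - u - v := by
    nlinarith [Real.sq_sqrt hu.le, Real.sq_sqrt hv.le, Real.sqrt_nonneg u, Real.sqrt_nonneg v]
  have hlt : √((1 - u - v) ^ 2 - 4 * u * v) < 1 - u - v := by
    rw [Real.sqrt_lt' hs]
    nlinarith [mul_pos hu hv]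
  linarith

theorem smallerRoot_add_mul_add (hD : 0 ≤ (1 - u - v) ^ 2 - 4 * u * v) :
    let c := ((1 - u - v) - √((1 - u - v) ^ 2 - 4 * u * v)) / 2
    (c + u) * (c + v) = c := by
  intro c
  linear_combination (1 / 4 : ℝ) * Real.sq_sqrt hD

end SmallerRoot

section FixedPoint

variable {a₁ a₂ b₁ b₂ l₁ l₂ : ℝ}

theorem twoPairCS_pos (ha₁ : 0 < a₁) (ha₂ : 0 < a₂) (hb₁ : 0 < b₁) (hb₂ : 0 < b₂)
    (hl₁ : 0 < l₁) (hl₂ : 0 < l₂) (hcond : √(b₁ * l₁ / a₁) + √(b₂ * l₂ / a₂) < 1) :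
    0 < twoPairCS a₁ a₂ b₁ b₂ l₁ l₂ :=
  smallerRoot_pos (by positivity) (by positivity) hcond

theorem twoPairCS_fixedPoint_mul (ha₁ : 0 < a₁) (ha₂ : 0 < a₂) (hb₁ : 0 < b₁) (hb₂ : 0 < b₂)
    (hl₁ : 0 < l₁) (hl₂ : 0 < l₂) (hcond : √(b₁ * l₁ / a₁) + √(b₂ * l₂ / a₂) < 1) :
    (a₁ * twoPairCS a₁ a₂ b₁ b₂ l₁ l₂ + b₁ * l₁) * (a₂ * twoPairCS a₁ a₂ b₁ b₂ l₁ l₂ + b₂ * l₂)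
      = a₁ * a₂ * twoPairCS a₁ a₂ b₁ b₂ l₁ l₂ := by
  have hroot := smallerRoot_add_mul_add
    (discrim_pos_of_sqrt_add_sqrt_lt_one (by positivity) (by positivity) hcond).le
  rw [← twoPairD, ← twoPairCS] at hroot
  set c := twoPairCS a₁ a₂ b₁ b₂ l₁ l₂
  calc (a₁ * c + b₁ * l₁) * (a₂ * c + b₂ * l₂)
      = a₁ * a₂ * ((c + b₁ * l₁ / a₁) * (c + b₂ * l₂ / a₂)) := by field_simp
    _ = a₁ * a₂ * c := by rw [hroot]

end FixedPoint

theorem mul_one_sub_mul_div_eq_of_mul_eq {a a' b l c P P' : ℝ} (hP : P ≠ 0)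
    (hPdef : P = a * c + b * l) (hmul : P * P' = a * a' * c) :
    a' * (1 - b * (l / P)) = P' := by
  field_simp
  linear_combination a' * hPdef - hmul

theorem twoPair_stay_above_repelling_general (a₁ a₂ b₁ b₂ l₁ l₂ : ℝ)
    (ha₁ : 0 < a₁) (ha₂ : 0 < a₂)
    (hb₁ : 0 < b₁) (hb₂ : 0 < b₂)
    (hl₁ : 0 < l₁) (hl₂ : 0 < l₂)
    (hcond : Real.sqrt (b₁ * l₁ / a₁) + Real.sqrt (b₂ * l₂ / a₂) < 1)
    (q₁ q₂ : ℝ)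
    (p₁ p₂ : ℕ → ℝ)
    (hrec₁ : ∀ t, p₁ (t + 1) = a₁ * (1 - b₂ * min (l₂ / p₂ t) q₂))
    (hrec₂ : ∀ t, p₂ (t + 1) = a₂ * (1 - b₁ * min (l₁ / p₁ t) q₁))
    (hq : q₁ < l₁ / (a₁ * twoPairCS a₁ a₂ b₁ b₂ l₁ l₂ + b₁ * l₁)) :
    (∀ t, 1 ≤ t → a₂ * twoPairCS a₁ a₂ b₁ b₂ l₁ l₂ + b₂ * l₂ < p₂ t) ∧
    (∀ t, 2 ≤ t → a₁ * twoPairCS a₁ a₂ b₁ b₂ l₁ l₂ + b₁ * l₁ < p₁ t) := by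
  have hc := twoPairCS_pos ha₁ ha₂ hb₁ hb₂ hl₁ hl₂ hcond
  have hmul := twoPairCS_fixedPoint_mul ha₁ ha₂ hb₁ hb₂ hl₁ hl₂ hcond
  set c := twoPairCS a₁ a₂ b₁ b₂ l₁ l₂
  have hp₁S : 0 < a₁ * c + b₁ * l₁ := by positivity
  have hp₂S : 0 < a₂ * c + b₂ * l₂ := by positivity
  have hfix₂ := mul_one_sub_mul_div_eq_of_mul_eq hp₁S.ne' rfl hmul
  have hfix₁ := mul_one_sub_mul_div_eq_of_mul_eq hp₂S.ne' rfl
    (by rw [mul_comm, hmul]; ring : (a₂ * c + b₂ * l₂) * (a₁ * c + b₁ * l₁) = a₂ * a₁ * c)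
  have above₂ : ∀ t, a₂ * c + b₂ * l₂ < p₂ (t + 1) := fun t => by
    rw [hrec₂, ← hfix₂]
    gcongr
    exact (min_le_right _ _).trans_lt hq
  have above₁ : ∀ t, a₁ * c + b₁ * l₁ < p₁ (t + 2) := fun t => by
    rw [hrec₁, ← hfix₁]
    gcongr
    exact (min_le_left _ _).trans_lt (div_lt_div_of_pos_left hl₂ hp₂S (above₂ t))
  refine ⟨fun t ht => ?_, fun t ht => ?_⟩
  · obtain ⟨k, rfl⟩ := Nat.exists_eq_add_of_le' ht
    exact above₂ k
  · obtain ⟨k, rfl⟩ := Nat.exists_eq_add_of_le' ht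
    exact above₁ k

/-- Sufficiency direction of the paper's Lemma 2: for the coupled recursion
`p_{1,t+1} = a₁(1 − b₂ min(λ₂/p_{2,t}, q₂))`, `p_{2,t+1} = a₂(1 − b₁ min(λ₁/p_{1,t}, q₁))`,
if `q₁ < λ₁/p_{1,S}` then `p_{2,t} > p_{2,S}` for all `t ≥ 1` and `p_{1,t} > p_{1,S}`
for all `t ≥ 2`, where `p_{i,S} = aᵢ c_S + bᵢ λᵢ`. -/
theorem twoPair_stay_above_repelling (a₁ a₂ b₁ b₂ l₁ l₂ : ℝ)
    (ha₁ : 0 < a₁) (ha₁' : a₁ ≤ 1) (ha₂ : 0 < a₂) (ha₂' : a₂ ≤ 1)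
    (hb₁ : 0 < b₁) (hb₁' : b₁ < 1) (hb₂ : 0 < b₂) (hb₂' : b₂ < 1)
    (hl₁ : 0 < l₁) (hl₂ : 0 < l₂)
    (hcond : Real.sqrt (b₁ * l₁ / a₁) + Real.sqrt (b₂ * l₂ / a₂) < 1)
    (q₁ q₂ : ℝ) (hq₁ : 0 < q₁) (hq₁' : q₁ ≤ 1) (hq₂ : 0 < q₂) (hq₂' : q₂ ≤ 1)
    (p₁ p₂ : ℕ → ℝ) (hp₁0 : 0 < p₁ 0) (hp₂0 : 0 < p₂ 0)
    (hrec₁ : ∀ t, p₁ (t + 1) = a₁ * (1 - b₂ * min (l₂ / p₂ t) q₂))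
    (hrec₂ : ∀ t, p₂ (t + 1) = a₂ * (1 - b₁ * min (l₁ / p₁ t) q₁))
    (hq : q₁ < l₁ / (a₁ * twoPairCS a₁ a₂ b₁ b₂ l₁ l₂ + b₁ * l₁)) :
    (∀ t, 1 ≤ t → a₂ * twoPairCS a₁ a₂ b₁ b₂ l₁ l₂ + b₂ * l₂ < p₂ t) ∧
    (∀ t, 2 ≤ t → a₁ * twoPairCS a₁ a₂ b₁ b₂ l₁ l₂ + b₁ * l₁ < p₁ t) :=
  twoPair_stay_above_repelling_general a₁ a₂ b₁ b₂ l₁ l₂ ha₁ ha₂ hb₁ hb₂ hl₁ hl₂ hcond q₁ q₂ p₁ p₂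
    hrec₁ hrec₂ hq
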